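/- arXiv:2505.22055 — 3 statements merged into one kernel-verified Lean document; each statement's English description precedes it below -/
import Mathlib

section
/- Let q be a prime power and m < n. The map assigning to each m-dimensional F_q-subspace S of F_{q^n} the coset of det(M(x_1,...,x_m)) in F_{q^n}^*/F_q^* (for any basis x_1,...,x_m of S) is a well-defined proper coloring of the Grassmann graph J_q(n,m): any two distinct m-spaces intersecting in an (m-1)-space receive distinct cosets. -/
/-- The Moore determinant of a basis of an `m`-space `S`. -/
def mooreDet {F : Type} [Field F] (q m : ℕ) (x : Fin m → F) : F :=
  Matrix.det (Matrix.of fun i j : Fin m => x j ^ q ^ (i : ℕ))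

/-!
Over `K = 𝔽_q` the maps `w ↦ w ^ q ^ i` are `K`-linear, so writing one basis in terms of another
multiplies the Moore matrix on the right by the change-of-basis matrix, which has entries in `K`:
the coset is well defined. The Moore determinant of independent vectors `x₁, …, x_m` is nonzero,
since a vector `a ≠ 0` in the left kernel of the Moore matrix gives the nonzero polynomial
`∑ aᵢ X ^ q ^ i` of degree `< q ^ m` vanishing on their span, which has `q ^ m` elements.
For adjacent `S₁ = W + ⟨u⟩` and `S₂ = W + ⟨v⟩`, fix a basis `z` of `W`; the Moore determinant of
`(z, w)` is `K`-linear in `w`, so if the colors agree it vanishes at `w = u - β v` for some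
`β ∈ K`, whence `u - β v ∈ W` and `u ∈ S₂`, i.e. `u ∈ W`, a contradiction.
-/

open Polynomial Module Submodule

theorem FiniteField.frobeniusAlgHom_pow_apply (K : Type*) {R : Type*} [Field K] [Fintype K]
    [CommRing R] [Algebra K R] (i : ℕ) (x : R) :
    (frobeniusAlgHom K R ^ i) x = x ^ Fintype.card K ^ i := by
  rw [AlgHom.coe_pow, coe_frobeniusAlgHom, pow_iterate]

theorem Submodule.exists_linearIndependent_span_eq {K V : Type*} [Field K] [AddCommGroup V]
    [Module K V] (W : Submodule K V) [FiniteDimensional K W] {m : ℕ} (h : finrank K W = m) :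
    ∃ z : Fin m → V, LinearIndependent K z ∧ span K (Set.range z) = W := by
  let b := Module.finBasisOfFinrankEq K W h
  refine ⟨W.subtype ∘ b, b.linearIndependent.map' W.subtype W.ker_subtype, ?_⟩
  rw [Set.range_comp, ← Submodule.map_span, b.span_eq, Submodule.map_top, Submodule.range_subtype]

section MooreMatrix

variable {K F : Type*} [Field F] {m : ℕ}

def mooreMatrix (q : ℕ) (x : Fin m → F) : Matrix (Fin m) (Fin m) F :=
  Matrix.of fun i j => x j ^ q ^ (i : ℕ)

theorem mooreMatrix_update (q : ℕ) (x : Fin m → F) (j : Fin m) (w : F) :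
    mooreMatrix q (Function.update x j w) =
      (mooreMatrix q x).updateCol j fun i => w ^ q ^ (i : ℕ) := by
  ext i k
  by_cases hk : k = j
  · subst hk; simp [mooreMatrix]
  · simp [mooreMatrix, hk]

variable [Field K] [Fintype K] [Algebra K F]

theorem mooreMatrix_linearCombination (x : Fin m → F) (A : Matrix (Fin m) (Fin m) K) :
    mooreMatrix (Fintype.card K) (fun j => ∑ k, A k j • x k) =
      mooreMatrix (Fintype.card K) x * A.map (algebraMap K F) := by
  ext i j
  simp only [mooreMatrix, Matrix.of_apply, Matrix.mul_apply, Matrix.map_apply,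
    ← FiniteField.frobeniusAlgHom_pow_apply, map_sum, map_smul]
  simp only [Algebra.smul_def, mul_comm]

end MooreMatrix

section LinearizedPoly

variable {F : Type*} [Field F] {m : ℕ}

noncomputable def linearizedPoly (q : ℕ) (a : Fin m → F) : F[X] :=
  ∑ i, C (a i) * X ^ q ^ (i : ℕ)

theorem eval_linearizedPoly (q : ℕ) (a : Fin m → F) (w : F) :
    (linearizedPoly q a).eval w = ∑ i, a i * w ^ q ^ (i : ℕ) := by
  simp [linearizedPoly, eval_finsetSum]

theorem coeff_linearizedPoly {q : ℕ} (hq : 1 < q) (a : Fin m → F) (i : Fin m) :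
    (linearizedPoly q a).coeff (q ^ (i : ℕ)) = a i := by
  simp [linearizedPoly, finsetSum_coeff, (Nat.pow_right_injective hq).eq_iff, Fin.val_inj]

theorem natDegree_linearizedPoly_lt {q : ℕ} (hq : 1 < q) (a : Fin m → F) :
    (linearizedPoly q a).natDegree < q ^ m := by
  refine (natDegree_sum_le_of_forall_le _ _ fun i _ => ?_).trans_lt
    (Nat.sub_one_lt (pow_pos (zero_lt_one.trans hq) m).ne')
  exact (natDegree_C_mul_X_pow_le _ _).trans
    (Nat.le_sub_one_of_lt (Nat.pow_lt_pow_right hq i.isLt))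

theorem eval_linearizedPoly_eq_zero_of_mem_span (K : Type*) [Field K] [Fintype K] [Algebra K F]
    {a x : Fin m → F} (hx : ∀ j, (linearizedPoly (Fintype.card K) a).eval (x j) = 0) {w : F}
    (hw : w ∈ span K (Set.range x)) : (linearizedPoly (Fintype.card K) a).eval w = 0 := by
  induction hw using span_induction with
  | mem w hw => obtain ⟨j, rfl⟩ := hw; exact hx j
  | zero => simp [eval_linearizedPoly, Fintype.card_pos.ne']
  | add u v _ _ hu hv =>
    simp only [eval_linearizedPoly, ← FiniteField.frobeniusAlgHom_pow_apply, map_add, mul_add,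
      Finset.sum_add_distrib] at hu hv ⊢
    rw [hu, hv, add_zero]
  | smul c u _ hu =>
    simp only [eval_linearizedPoly, ← FiniteField.frobeniusAlgHom_pow_apply, map_smul,
      mul_smul_comm, ← Finset.smul_sum] at hu ⊢
    rw [hu, smul_zero]

end LinearizedPoly

section MooreDet

variable {K F : Type} [Field K] [Fintype K] [Field F] [Algebra K F] {m : ℕ}

theorem mooreDet_eq_det (q : ℕ) (x : Fin m → F) : mooreDet q m x = (mooreMatrix q x).det := rfl

theorem mooreDet_linearCombination (x : Fin m → F) (A : Matrix (Fin m) (Fin m) K) :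
    mooreDet (Fintype.card K) m (fun j => ∑ k, A k j • x k) =
      algebraMap K F A.det * mooreDet (Fintype.card K) m x := by
  rw [mooreDet_eq_det, mooreMatrix_linearCombination, Matrix.det_mul, RingHom.map_det,
    RingHom.mapMatrix_apply, mooreDet_eq_det, mul_comm]

theorem exists_mooreDet_eq_algebraMap_mul_of_forall_mem_span {x y : Fin m → F}
    (hxy : ∀ j, x j ∈ span K (Set.range y)) :
    ∃ a : K, mooreDet (Fintype.card K) m x = algebraMap K F a * mooreDet (Fintype.card K) m y := by
  choose c hc using fun j => (mem_span_range_iff_exists_fun K).mp (hxy j)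
  refine ⟨(Matrix.of fun k j => c j k).det, ?_⟩
  rw [← mooreDet_linearCombination]
  simp only [Matrix.of_apply, hc]

theorem mooreDet_update_sub_smul (x : Fin m → F) (j : Fin m) (u v : F) (c : K) :
    mooreDet (Fintype.card K) m (Function.update x j (u - c • v)) =
      mooreDet (Fintype.card K) m (Function.update x j u) -
        algebraMap K F c * mooreDet (Fintype.card K) m (Function.update x j v) := by
  have hcol : (fun i : Fin m => (u - c • v) ^ Fintype.card K ^ (i : ℕ)) =
      (fun i : Fin m => u ^ Fintype.card K ^ (i : ℕ)) +
        (-algebraMap K F c) • fun i : Fin m => v ^ Fintype.card K ^ (i : ℕ) := by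
    ext i
    rw [Pi.add_apply, Pi.smul_apply, smul_eq_mul]
    simp only [← FiniteField.frobeniusAlgHom_pow_apply, Algebra.smul_def, map_sub, map_mul,
      AlgHom.commutes]
    ring
  simp only [mooreDet_eq_det, mooreMatrix_update, hcol, Matrix.det_updateCol_add,
    Matrix.det_updateCol_smul]
  ring

theorem mooreDet_ne_zero {x : Fin m → F} (hx : LinearIndependent K x) :
    mooreDet (Fintype.card K) m x ≠ 0 := by
  have hq : 1 < Fintype.card K := Fintype.one_lt_card
  intro h
  obtain ⟨a, ha, hrow⟩ := Matrix.exists_vecMul_eq_zero_iff.mpr h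
  have hroots (j : Fin m) : (linearizedPoly (Fintype.card K) a).eval (x j) = 0 := by
    simpa [eval_linearizedPoly, Matrix.vecMul, dotProduct, mooreMatrix] using congrFun hrow j
  let W := span K (Set.range x)
  have := Module.Finite.span_of_finite K (Set.finite_range x)
  have := Module.finite_of_finite K (M := W)
  have := Fintype.ofFinite W
  have hcard : Fintype.card W = Fintype.card K ^ m := by
    rw [Module.card_eq_pow_finrank (K := K), finrank_span_eq_card hx, Fintype.card_fin]
  have hzero : linearizedPoly (Fintype.card K) a = 0 :=
    eq_zero_of_natDegree_lt_card_of_eval_eq_zero _ Subtype.val_injective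
      (fun w : W => eval_linearizedPoly_eq_zero_of_mem_span K hroots w.2)
      (hcard ▸ natDegree_linearizedPoly_lt hq a)
  exact ha (funext fun i => by
    rw [← coeff_linearizedPoly hq a i, hzero, coeff_zero, Pi.zero_apply])

theorem sub_smul_mem_span_of_mooreDet_snoc_eq {z : Fin m → F} (hz : LinearIndependent K z)
    {u v : F} {c : K} (h : mooreDet (Fintype.card K) (m + 1) (Fin.snoc z u) =
      algebraMap K F c * mooreDet (Fintype.card K) (m + 1) (Fin.snoc z v)) :
    u - c • v ∈ span K (Set.range z) := by
  by_contra hmem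
  apply mooreDet_ne_zero (linearIndependent_finSnoc.mpr ⟨hz, hmem⟩)
  have hsnoc (w : F) :
      Fin.snoc z w = Function.update (Fin.snoc z 0 : Fin (m + 1) → F) (Fin.last m) w :=
    (Fin.update_snoc_last ..).symm
  rw [hsnoc u, hsnoc v] at h
  rw [hsnoc, mooreDet_update_sub_smul, h, sub_self]

theorem mooreDet_ne_algebraMap_mul_of_finrank_inf {S₁ S₂ : Submodule K F}
    (h₁ : finrank K S₁ = m + 1) (h₂ : finrank K S₂ = m + 1) (hinf : finrank K ↥(S₁ ⊓ S₂) = m)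
    {x y : Fin (m + 1) → F} (hx : span K (Set.range x) = S₁) (hy : span K (Set.range y) = S₂)
    (α : K) :
    mooreDet (Fintype.card K) (m + 1) x ≠
      algebraMap K F α * mooreDet (Fintype.card K) (m + 1) y := by
  intro hxy
  have := Module.finite_of_finrank_eq_succ h₁
  obtain ⟨z, hz, hzW⟩ := (S₁ ⊓ S₂).exists_linearIndependent_span_eq hinf
  obtain ⟨u, huS₁, huW⟩ := SetLike.exists_of_lt <| inf_le_left.lt_of_ne fun h => by
    rw [h, h₁] at hinf; omega
  obtain ⟨v, hvS₂, hvW⟩ := SetLike.exists_of_lt <| inf_le_right.lt_of_ne fun h => by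
    rw [h, h₂] at hinf; omega
  have hz_mem (j : Fin m) : z j ∈ S₁ ⊓ S₂ := hzW ▸ subset_span ⟨j, rfl⟩
  obtain ⟨a, ha⟩ := exists_mooreDet_eq_algebraMap_mul_of_forall_mem_span (K := K)
    (x := Fin.snoc z u) (y := x)
    (Fin.lastCases (by simpa [hx] using huS₁) fun j => by simpa [hx] using (hz_mem j).1)
  obtain ⟨b, hb⟩ := exists_mooreDet_eq_algebraMap_mul_of_forall_mem_span (K := K)
    (x := Fin.snoc z v) (y := y)
    (Fin.lastCases (by simpa [hy] using hvS₂) fun j => by simpa [hy] using (hz_mem j).2)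
  have hb0 : algebraMap K F b ≠ 0 := left_ne_zero_of_mul <|
    hb ▸ mooreDet_ne_zero (linearIndependent_finSnoc.mpr ⟨hz, hzW ▸ hvW⟩)
  have huv : mooreDet (Fintype.card K) (m + 1) (Fin.snoc z u) =
      algebraMap K F (a * α / b) * mooreDet (Fintype.card K) (m + 1) (Fin.snoc z v) := by
    rw [ha, hxy, hb, map_div₀, map_mul]
    field_simp
  have hmem := hzW ▸ sub_smul_mem_span_of_mooreDet_snoc_eq hz huv
  exact huW ⟨huS₁, by simpa using S₂.add_mem hmem.2 (S₂.smul_mem (a * α / b) hvS₂)⟩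

end MooreDet

theorem moore_det_coloring_general (q m : ℕ) (hm : 0 < m)
    (K F : Type) [Field K] [Field F] [Algebra K F] [Fintype K]
    (hK : Fintype.card K = q) :
    -- well-definedness: any two bases of the same `m`-space give Moore determinants
    -- in the same coset of `F_{q^n}^*/F_q^*`
    (∀ S : Submodule K F, Module.finrank K S = m →
      ∀ x y : Fin m → F, LinearIndependent K x → LinearIndependent K y →
        Submodule.span K (Set.range x) = S → Submodule.span K (Set.range y) = S →
          ∃ α : K, α ≠ 0 ∧ mooreDet q m x = algebraMap K F α * mooreDet q m y) ∧
    -- properness: adjacent vertices of `J_q(n,m)` receive distinct cosets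
    (∀ S₁ S₂ : Submodule K F, Module.finrank K S₁ = m → Module.finrank K S₂ = m →
      S₁ ≠ S₂ → Module.finrank K ↥(S₁ ⊓ S₂) = m - 1 →
      ∀ x y : Fin m → F, LinearIndependent K x → LinearIndependent K y →
        Submodule.span K (Set.range x) = S₁ → Submodule.span K (Set.range y) = S₂ →
          ∀ α : K, mooreDet q m x ≠ algebraMap K F α * mooreDet q m y) := by
  subst hK
  refine ⟨fun S _ x y hx _ hxS hyS => ?_, fun S₁ S₂ h₁ h₂ _ hinf x y _ _ hxS hyS α => ?_⟩
  · obtain ⟨a, ha⟩ := exists_mooreDet_eq_algebraMap_mul_of_forall_mem_span (K := K)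
      (x := x) (y := y) fun j => hyS ▸ hxS ▸ subset_span ⟨j, rfl⟩
    refine ⟨a, ?_, ha⟩
    rintro rfl
    exact mooreDet_ne_zero hx (by simpa using ha)
  · obtain ⟨k, rfl⟩ := Nat.exists_eq_add_of_lt hm
    exact mooreDet_ne_algebraMap_mul_of_finrank_inf h₁ h₂ hinf hxS hyS α

/-- The coset of the Moore determinant in `F_{q^n}^*/F_q^*` is a well-defined proper
coloring of the Grassmann graph `J_q(n,m)`: it is independent of the choice of basis,
and any two distinct `m`-spaces meeting in an `(m-1)`-space receive different cosets. -/
theorem moore_det_coloring (q n m : ℕ) (hq : IsPrimePow q) (hm : 0 < m) (hmn : m < n)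
    (K F : Type) [Field K] [Field F] [Algebra K F] [Fintype K] [Fintype F]
    (hK : Fintype.card K = q) (hF : Fintype.card F = q ^ n) :
    -- well-definedness: any two bases of the same `m`-space give Moore determinants
    -- in the same coset of `F_{q^n}^*/F_q^*`
    (∀ S : Submodule K F, Module.finrank K S = m →
      ∀ x y : Fin m → F, LinearIndependent K x → LinearIndependent K y →
        Submodule.span K (Set.range x) = S → Submodule.span K (Set.range y) = S →
          ∃ α : K, α ≠ 0 ∧ mooreDet q m x = algebraMap K F α * mooreDet q m y) ∧
    -- properness: adjacent vertices of `J_q(n,m)` receive distinct cosets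
    (∀ S₁ S₂ : Submodule K F, Module.finrank K S₁ = m → Module.finrank K S₂ = m →
      S₁ ≠ S₂ → Module.finrank K ↥(S₁ ⊓ S₂) = m - 1 →
      ∀ x y : Fin m → F, LinearIndependent K x → LinearIndependent K y →
        Submodule.span K (Set.range x) = S₁ → Submodule.span K (Set.range y) = S₂ →
          ∀ α : K, mooreDet q m x ≠ algebraMap K F α * mooreDet q m y) :=
  moore_det_coloring_general q m hm K F hK
end

section
/- Let q = 2^e, k ≥ 1, and let x̄, ȳ, z̄ be nonzero vectors in V = F_{q^{2k+1}} × F_q such that S_1 = span(x̄, ȳ) and S_2 = span(x̄, z̄) are distinct 2-dimensional F_q-subspaces. Then the sets g(S_1) = {g(ū, v̄) : ū, v̄ ∈ S_1} and g(S_2) = {g(ū, v̄) : ū, v̄ ∈ S_2}, which are F_2-subspaces of F_{q^{2k+1}}, intersect only in 0. -/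
/-!
Write `g(ū, v̄) = B(ū, v̄)^(q+1) + T(ū, v̄)` with `B(ū, v̄) = u₁v + v₁u` and
`T(ū, v̄) = uv^q + u^q v`. In characteristic 2 both are alternating `𝔽_q`-bilinear forms, so
`g(aū + bv̄, cū + dv̄) = g(ū, (ad - bc)v̄)` and `g(span(x̄, ȳ)) = {g(x̄, αȳ) : α ∈ 𝔽_q}`.

The heart of the matter is that `g(x̄, ū) = g(x̄, v̄)` forces `v̄ - ū ∈ 𝔽_q x̄`. If `x₁ ≠ 0` this
follows from `x₁² g(x̄, ū) = (x₁ B(x̄, ū) + x)^(q+1) + x^(q+1)`, since `t ↦ t^(q+1)` is injective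
on `𝔽_(q^(2k+1))`. If `x₁ = 0` then `g(x̄, ·)` is additive, and its kernel equation becomes
`t^q + t = w₁²` with `t = w/x`; applying Frobenius gives `t^(q²) = t`, hence `t^q = t` because
the degree `2k + 1` is odd, so `w₁ = 0` and `t ∈ 𝔽_q`.

A common nonzero value `g(x̄, αȳ) = g(x̄, βz̄)` therefore puts `z̄` into `span(x̄, ȳ)`, and the
two planes, both of dimension 2, coincide.
-/

/-- The bivariate function `g((x,x₁),(y,y₁)) = (x₁y + y₁x)^{q+1} + xy^q + x^q y`
on `V = F_{q^{2k+1}} × F_q`. -/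
def gfun (K F : Type) [Field K] [Field F] [Algebra K F] (q : ℕ) (xb yb : F × K) : F :=
  (algebraMap K F xb.2 * yb.1 + algebraMap K F yb.2 * xb.1) ^ (q + 1) +
    xb.1 * yb.1 ^ q + xb.1 ^ q * yb.1

open Polynomial Submodule

namespace FiniteField

theorem mem_range_algebraMap_of_pow_card_eq_self (K : Type*) {L : Type*} [Field K] [Fintype K]
    [Field L] [Algebra K L] {t : L} (ht : t ^ Fintype.card K = t) :
    t ∈ (algebraMap K L).range := by
  have hsplits : (X ^ Fintype.card K - X : K[X]).Splits := by
    rw [splits_iff_card_roots, roots_X_pow_card_sub_X, ← Finset.card_def, Finset.card_univ,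
      X_pow_card_sub_X_natDegree_eq K Fintype.one_lt_card]
  have hroot : t ∈ (map (algebraMap K L) (X ^ Fintype.card K - X)).roots := by
    rw [mem_roots (map_ne_zero (X_pow_card_sub_X_ne_zero K Fintype.one_lt_card))]
    simp [ht]
  rw [hsplits.roots_map, roots_X_pow_card_sub_X, Multiset.mem_map] at hroot
  obtain ⟨a, -, ha⟩ := hroot
  exact ⟨a, ha⟩

theorem add_pow_card (K : Type*) {L : Type*} [Field K] [Fintype K] [CommRing L] [Algebra K L]
    (a b : L) : (a + b) ^ Fintype.card K = a ^ Fintype.card K + b ^ Fintype.card K :=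
  map_add (frobeniusAlgHom K L) a b

theorem algebraMap_pow_card {K L : Type*} [Field K] [Fintype K] [CommRing L] [Algebra K L]
    (a : K) : algebraMap K L a ^ Fintype.card K = algebraMap K L a :=
  (frobeniusAlgHom K L).commutes a

variable {F : Type*} [Field F] [Fintype F] {q n : ℕ}

theorem pow_eq_self_of_pow_pow_two_eq_self (hF : Fintype.card F = q ^ n) (hn : Odd n) {t : F}
    (ht : t ^ q ^ 2 = t) : t ^ q = t := by
  obtain ⟨m, rfl⟩ := hn
  have hiter : ∀ j : ℕ, t ^ q ^ (2 * j) = t := by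
    intro j
    induction j with
    | zero => simp
    | succ j ih => rw [mul_add_one, pow_add, pow_mul, ih, ht]
  calc t ^ q = (t ^ q ^ (2 * m)) ^ q := by rw [hiter]
    _ = t := by rw [← pow_mul, ← pow_succ, ← hF, pow_card]

theorem eq_one_of_pow_add_one_eq_one [CharP F 2] (hF : Fintype.card F = q ^ n) (hn : Odd n)
    {t : F} (ht : t ^ (q + 1) = 1) : t = 1 := by
  have hinv : t ^ q = t⁻¹ := eq_inv_of_mul_eq_one_left (by rwa [← pow_succ])
  have hfix : t ^ q = t :=
    pow_eq_self_of_pow_pow_two_eq_self hF hn (by rw [sq, pow_mul, hinv, inv_pow, hinv, inv_inv])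
  have ht0 : t ≠ 0 := by
    rintro rfl
    simp at ht
  have hsq : t * t = 1 := by rw [← mul_inv_cancel₀ ht0, ← hinv, hfix]
  exact sub_eq_zero.mp (eq_zero_of_pow_eq_zero (n := 2) (by
    linear_combination hsq + (1 - t) * CharTwo.two_eq_zero (R := F)))

theorem pow_add_one_injective [CharP F 2] (hF : Fintype.card F = q ^ n) (hn : Odd n) :
    Function.Injective fun a : F => a ^ (q + 1) := by
  intro a b hab
  dsimp only at hab
  rcases eq_or_ne b 0 with rfl | hb
  · simpa using hab
  · refine (div_eq_one_iff_eq hb).mp (eq_one_of_pow_add_one_eq_one hF hn ?_)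
    rw [div_pow, hab, div_self (pow_ne_zero _ hb)]

end FiniteField

theorem mem_span_pair_of_smul_sub_smul_mem {K M : Type*} [Field K] [AddCommGroup M] [Module K M]
    {x y z : M} {α β : K} (hβ : β ≠ 0) (h : β • z - α • y ∈ K ∙ x) : z ∈ span K {x, y} := by
  obtain ⟨c, hc⟩ := mem_span_singleton.mp h
  refine mem_span_pair.mpr ⟨β⁻¹ * c, β⁻¹ * α, ?_⟩
  rw [mul_smul, mul_smul, ← smul_add, hc, sub_add_cancel, inv_smul_smul₀ hβ]

theorem charP_two_of_card_eq_two_pow {K : Type*} [Field K] [Fintype K] {e : ℕ}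
    (hK : Fintype.card K = 2 ^ e) : CharP K 2 := by
  have h : (2 : K) ^ e = 0 := by exact_mod_cast hK ▸ FiniteField.cast_card_eq_zero K
  exact CharTwo.of_one_ne_zero_of_two_eq_zero one_ne_zero (eq_zero_of_pow_eq_zero h)

theorem LinearMap.IsAlt.apply_smul_add_smul_smul_add_smul {R M N : Type*} [CommRing R]
    [AddCommGroup M] [Module R M] [AddCommGroup N] [Module R N] {B : M →ₗ[R] M →ₗ[R] N}
    (hB : B.IsAlt) (x y : M) (a b c d : R) :
    B (a • x + b • y) (c • x + d • y) = (a * d - b * c) • B x y := by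
  simp only [map_add, map_smul, LinearMap.add_apply, LinearMap.smul_apply, hB.self_eq_zero,
    ← hB.neg y x]
  module

section Forms

variable (K F : Type*) [Field K] [Field F] [Algebra K F]

def polarForm : (F × K) →ₗ[K] (F × K) →ₗ[K] F :=
  LinearMap.mk₂ K (fun u v => algebraMap K F u.2 * v.1 + algebraMap K F v.2 * u.1)
    (fun _ _ _ => by simp only [Prod.fst_add, Prod.snd_add, map_add]; ring)
    (fun _ _ _ => by
      simp only [Prod.smul_fst, Prod.smul_snd, smul_eq_mul, Algebra.smul_def (A := F), map_mul]
      ring)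
    (fun _ _ _ => by simp only [Prod.fst_add, Prod.snd_add, map_add]; ring)
    (fun _ _ _ => by
      simp only [Prod.smul_fst, Prod.smul_snd, smul_eq_mul, Algebra.smul_def (A := F), map_mul]
      ring)

def frobeniusForm [Fintype K] : (F × K) →ₗ[K] (F × K) →ₗ[K] F :=
  let φ := FiniteField.frobeniusAlgHom K F
  LinearMap.mk₂ K (fun u v => u.1 * φ v.1 + φ u.1 * v.1)
    (fun _ _ _ => by simp only [Prod.fst_add, map_add]; ring)
    (fun _ _ _ => by simp only [Prod.smul_fst, map_smul, smul_mul_assoc, smul_add])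
    (fun _ _ _ => by simp only [Prod.fst_add, map_add]; ring)
    (fun _ _ _ => by simp only [Prod.smul_fst, map_smul, mul_smul_comm, smul_add])

variable {K F}

theorem polarForm_apply (u v : F × K) :
    polarForm K F u v = algebraMap K F u.2 * v.1 + algebraMap K F v.2 * u.1 := rfl

theorem frobeniusForm_apply [Fintype K] (u v : F × K) :
    frobeniusForm K F u v = u.1 * v.1 ^ Fintype.card K + u.1 ^ Fintype.card K * v.1 := rfl

theorem polarForm_isAlt [CharP F 2] : (polarForm K F).IsAlt := fun u => by
  rw [polarForm_apply, CharTwo.add_eq_zero, mul_comm]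

theorem frobeniusForm_isAlt [Fintype K] [CharP F 2] : (frobeniusForm K F).IsAlt := fun u => by
  rw [frobeniusForm_apply, CharTwo.add_eq_zero, mul_comm]

theorem mem_span_singleton_of_polarForm_eq_zero [CharP F 2] {x w : F × K} (hx : x.2 ≠ 0)
    (h : polarForm K F x w = 0) : w ∈ K ∙ x := by
  refine mem_span_singleton.mpr ⟨w.2 / x.2, Prod.ext ?_ (div_mul_cancel₀ _ hx)⟩
  have hX : algebraMap K F x.2 ≠ 0 := by simpa using hx
  rw [polarForm_apply, CharTwo.add_eq_zero] at h
  rw [Prod.smul_fst, Algebra.smul_def, map_div₀, div_mul_eq_mul_div, div_eq_iff hX, ← h, mul_comm]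

end Forms

section Gfun

variable {K F : Type} [Field K] [Fintype K] [Field F] [Algebra K F]

open FiniteField

local notation "q" => Fintype.card K

theorem gfun_eq_polarForm_add_frobeniusForm (u v : F × K) :
    gfun K F q u v = polarForm K F u v ^ (q + 1) + frobeniusForm K F u v :=
  add_assoc _ _ _

theorem gfun_zero_right (x : F × K) : gfun K F q x 0 = 0 := by
  simp [gfun_eq_polarForm_add_frobeniusForm]

theorem gfun_of_snd_eq_zero {x : F × K} (hx : x.2 = 0) (u : F × K) :
    gfun K F q x u = algebraMap K F u.2 ^ 2 * x.1 ^ (q + 1) + frobeniusForm K F x u := by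
  rw [gfun_eq_polarForm_add_frobeniusForm, polarForm_apply, hx, map_zero, zero_mul, zero_add,
    mul_pow, pow_succ (algebraMap K F u.2), algebraMap_pow_card, ← sq]

variable [CharP F 2]

theorem gfun_smul_add_smul_smul_add_smul (x y : F × K) (a b c d : K) :
    gfun K F q (a • x + b • y) (c • x + d • y) = gfun K F q x ((a * d - b * c) • y) := by
  rw [gfun_eq_polarForm_add_frobeniusForm, gfun_eq_polarForm_add_frobeniusForm,
    (polarForm_isAlt (K := K) (F := F)).apply_smul_add_smul_smul_add_smul,
    (frobeniusForm_isAlt (K := K) (F := F)).apply_smul_add_smul_smul_add_smul, map_smul, map_smul]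

theorem gfun_image_span_pair (x y : F × K) :
    {w | ∃ u ∈ span K {x, y}, ∃ v ∈ span K {x, y}, gfun K F q u v = w} =
      Set.range fun α : K => gfun K F q x (α • y) := by
  ext w
  constructor
  · rintro ⟨u, hu, v, hv, rfl⟩
    obtain ⟨a, b, rfl⟩ := mem_span_pair.mp hu
    obtain ⟨c, d, rfl⟩ := mem_span_pair.mp hv
    exact ⟨a * d - b * c, (gfun_smul_add_smul_smul_add_smul x y a b c d).symm⟩
  · rintro ⟨α, rfl⟩
    exact ⟨x, subset_span (by simp), α • y, smul_mem _ _ (subset_span (by simp)), rfl⟩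

theorem sq_mul_gfun (x u : F × K) :
    algebraMap K F x.2 ^ 2 * gfun K F q x u =
      (algebraMap K F x.2 * polarForm K F x u + x.1) ^ (q + 1) + x.1 ^ (q + 1) := by
  set X := algebraMap K F x.2
  have hB : polarForm K F x u ^ q = X * u.1 ^ q + algebraMap K F u.2 * x.1 ^ q := by
    rw [polarForm_apply, add_pow_card K, mul_pow, mul_pow, algebraMap_pow_card,
      algebraMap_pow_card]
  have hL : (X * polarForm K F x u + x.1) ^ q = X * polarForm K F x u ^ q + x.1 ^ q := by
    rw [add_pow_card K, mul_pow, algebraMap_pow_card]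
  rw [gfun_eq_polarForm_add_frobeniusForm, frobeniusForm_apply, pow_succ (X * _ + _), hL, hB,
    pow_succ (polarForm K F x u), hB, polarForm_apply]
  linear_combination (-(X * algebraMap K F u.2 * x.1 ^ (q + 1)) - x.1 ^ (q + 1)) *
    CharTwo.two_eq_zero (R := F)

theorem gfun_add_right_of_snd_eq_zero {x : F × K} (hx : x.2 = 0) (u w : F × K) :
    gfun K F q x (u + w) = gfun K F q x u + gfun K F q x w := by
  simp only [gfun_of_snd_eq_zero hx, map_add, Prod.snd_add, CharTwo.add_sq]
  ring

variable [Fintype F] {n : ℕ}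

theorem mem_span_singleton_of_gfun_eq_zero_of_snd_eq_zero (hF : Fintype.card F = q ^ n)
    (hn : Odd n) {x w : F × K} (hx₂ : x.2 = 0) (hx₁ : x.1 ≠ 0) (h : gfun K F q x w = 0) :
    w ∈ K ∙ x := by
  obtain ⟨t, ht⟩ : ∃ t, w.1 = t * x.1 := ⟨w.1 / x.1, (div_mul_cancel₀ _ hx₁).symm⟩
  have hkernel : t ^ q + t = algebraMap K F w.2 ^ 2 := by
    rw [gfun_of_snd_eq_zero hx₂, frobeniusForm_apply, ht] at h
    apply mul_left_cancel₀ (pow_ne_zero (q + 1) hx₁)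
    linear_combination h - algebraMap K F w.2 ^ 2 * x.1 ^ (q + 1) * CharTwo.two_eq_zero (R := F)
  have htq : t ^ q = t := by
    refine pow_eq_self_of_pow_pow_two_eq_self hF hn ?_
    have hfrob : (t ^ q) ^ q + t ^ q = t ^ q + t := by
      rw [← add_pow_card K, hkernel, ← map_pow, algebraMap_pow_card]
    rw [sq, pow_mul]
    exact add_right_cancel (hfrob.trans (add_comm _ _))
  have hw₂ : w.2 = 0 := by
    rwa [htq, CharTwo.add_self_eq_zero, eq_comm, sq_eq_zero_iff,
      map_eq_zero_iff _ (algebraMap K F).injective] at hkernel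
  obtain ⟨c, rfl⟩ := mem_range_algebraMap_of_pow_card_eq_self K htq
  exact mem_span_singleton.mpr ⟨c, Prod.ext (by rw [Prod.smul_fst, Algebra.smul_def, ht])
    (by rw [Prod.smul_snd, hx₂, hw₂, smul_zero])⟩

theorem sub_mem_span_singleton_of_gfun_eq (hF : Fintype.card F = q ^ n) (hn : Odd n)
    {x u v : F × K} (hx : x ≠ 0) (h : gfun K F q x u = gfun K F q x v) : v - u ∈ K ∙ x := by
  by_cases hx₂ : x.2 = 0
  · refine mem_span_singleton_of_gfun_eq_zero_of_snd_eq_zero hF hn hx₂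
      (fun hx₁ => hx (Prod.ext hx₁ hx₂)) ?_
    have hadd := gfun_add_right_of_snd_eq_zero hx₂ u (v - u)
    rwa [add_sub_cancel, h, left_eq_add] at hadd
  · refine mem_span_singleton_of_polarForm_eq_zero hx₂ ?_
    have hX : algebraMap K F x.2 ≠ 0 := by simpa using hx₂
    have hsq := congrArg (algebraMap K F x.2 ^ 2 * ·) h
    simp only [sq_mul_gfun] at hsq
    have hB := pow_add_one_injective hF hn (add_right_cancel hsq)
    rw [map_sub, sub_eq_zero]
    exact (mul_left_cancel₀ hX (add_right_cancel hB)).symm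

end Gfun

theorem gfun_images_meet_trivially_general (e k : ℕ)
    (K F : Type) [Field K] [Field F] [Algebra K F] [Fintype K] [Fintype F]
    (hK : Fintype.card K = 2 ^ e) (hF : Fintype.card F = (2 ^ e) ^ (2 * k + 1))
    (xb yb zb : F × K) (hx : xb ≠ 0)
    (S₁ S₂ : Submodule K (F × K))
    (hS₁ : S₁ = Submodule.span K {xb, yb}) (hS₂ : S₂ = Submodule.span K {xb, zb})
    (hd₁ : Module.finrank K S₁ = 2) (hd₂ : Module.finrank K S₂ = 2)
    (hne : S₁ ≠ S₂) :
    {w : F | ∃ u ∈ S₁, ∃ v ∈ S₁, gfun K F (2 ^ e) u v = w} ∩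
        {w : F | ∃ u ∈ S₂, ∃ v ∈ S₂, gfun K F (2 ^ e) u v = w} = {0} := by
  have : CharP K 2 := charP_two_of_card_eq_two_pow hK
  have : CharP F 2 := charP_of_injective_algebraMap (algebraMap K F).injective 2
  rw [← hK] at hF ⊢
  subst hS₁ hS₂
  rw [gfun_image_span_pair, gfun_image_span_pair]
  refine Set.eq_singleton_iff_unique_mem.mpr
    ⟨⟨⟨0, by simp [gfun_zero_right]⟩, ⟨0, by simp [gfun_zero_right]⟩⟩, ?_⟩
  rintro w ⟨⟨α, rfl⟩, ⟨β, hβ⟩⟩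
  dsimp only at hβ ⊢
  by_contra hw
  have hβ₀ : β ≠ 0 := by
    rintro rfl
    exact hw (by rw [← hβ, zero_smul, gfun_zero_right])
  have hz : zb ∈ span K {xb, yb} := mem_span_pair_of_smul_sub_smul_mem hβ₀
    (sub_mem_span_singleton_of_gfun_eq hF (odd_two_mul_add_one k) hx hβ.symm)
  have hle : span K {xb, zb} ≤ span K {xb, yb} := span_le.mpr
    (Set.insert_subset (subset_span (by simp)) (Set.singleton_subset_iff.mpr hz))
  have : FiniteDimensional K (span K {xb, yb}) := Module.finite_of_finrank_eq_succ hd₁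
  exact hne (eq_of_le_of_finrank_eq hle (hd₂.trans hd₁.symm)).symm

/-- If `S₁ = span(x̄,ȳ)` and `S₂ = span(x̄,z̄)` are distinct 2-dimensional subspaces of
`V = F_{q^{2k+1}} × F_q` through a common nonzero vector `x̄`, then
`g(S₁) ∩ g(S₂) = {0}`. -/
theorem gfun_images_meet_trivially (e k : ℕ) (he : 1 ≤ e) (hk : 1 ≤ k)
    (K F : Type) [Field K] [Field F] [Algebra K F] [Fintype K] [Fintype F]
    (hK : Fintype.card K = 2 ^ e) (hF : Fintype.card F = (2 ^ e) ^ (2 * k + 1))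
    (xb yb zb : F × K) (hx : xb ≠ 0) (hy : yb ≠ 0) (hz : zb ≠ 0)
    (S₁ S₂ : Submodule K (F × K))
    (hS₁ : S₁ = Submodule.span K {xb, yb}) (hS₂ : S₂ = Submodule.span K {xb, zb})
    (hd₁ : Module.finrank K S₁ = 2) (hd₂ : Module.finrank K S₂ = 2)
    (hne : S₁ ≠ S₂) :
    {w : F | ∃ u ∈ S₁, ∃ v ∈ S₁, gfun K F (2 ^ e) u v = w} ∩
        {w : F | ∃ u ∈ S₂, ∃ v ∈ S₂, gfun K F (2 ^ e) u v = w} = {0} :=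
  gfun_images_meet_trivially_general e k K F hK hF xb yb zb hx S₁ S₂ hS₁ hS₂ hd₁ hd₂ hne
end

section
/- Let q = 2^e and n = 2k+2 with k ≥ 1. The map sending each 2-dimensional F_q-subspace S of V = F_{q^{2k+1}} × F_q to the F_2-subspace g(S) ⊆ F_{q^{2k+1}} ≅ F_2^{(2k+1)e} is a graph homomorphism from the Grassmann graph J_q(n, 2) to the Kneser-type graph on e-dimensional F_2-subspaces of F_2^{(n-1)e} where adjacency is trivial intersection. -/
/-- A field of characteristic 2 is a `ZMod 2`-vector space (i.e. `F_2`-vector space). -/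
noncomputable instance charTwoModule (F : Type) [Field F] [CharP F 2] : Module (ZMod 2) F :=
  (ZMod.algebra F 2).toModule

/-!
Write `g(u, v) = B(u, v) ^ (q + 1) + T(u, v)` with `B(u, v) = x₁y + y₁x` (`altForm`) and
`T(u, v) = xy^q + x^qy` (`frobForm`). In characteristic 2 both are alternating and `F_q`-bilinear,
so `g(αu + βv, γu + δv) = g(u, (αδ + βγ)v)`, and `g(⟨u, v⟩)` is the image of the additive map
`λ ↦ g(u, λv)`.

Everything rests on one rigidity fact: `g(u, p + w) = g(u, p)` forces `w ∈ F_q u`. Expanded, it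
becomes an Artin–Schreier equation `a^q + a = c` with `c ∈ F_q`; iterating Frobenius `2k+1` times
gives `(2k+1)c = 0`, so `c = 0` because `[F : F_q]` is odd. Hence `λ ↦ g(u, λv)` is injective and
`|g(S)| = q`; and if `S₁ ∩ S₂ = F_q u`, a common value `g(u, p) = g(u, r)` with `p ∈ S₁`, `r ∈ S₂`
forces `r ∈ S₁ ∩ S₂`, so the value is `g(u, λu) = 0`.
-/

open Module Submodule

theorem FiniteField.mem_range_algebraMap_of_pow_card_eq {K L : Type*} [Field K] [Fintype K]
    [Field L] [Finite L] [Algebra K L] {x : L} (hx : x ^ Fintype.card K = x) :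
    x ∈ Set.range (algebraMap K L) := by
  rw [IsGalois.mem_range_algebraMap_iff_fixed]
  intro f
  obtain ⟨n, rfl⟩ := (FiniteField.bijective_frobeniusAlgEquivOfAlgebraic_pow K L).2 f
  rw [AlgEquiv.coe_pow]
  exact Function.IsFixedPt.iterate hx n

section ArtinSchreier

variable {F : Type*} [Field F] [Fintype F] [CharP F 2] {e m : ℕ}

theorem eq_zero_of_pow_add_self_eq (hF : Fintype.card F = (2 ^ e) ^ m) (hm : Odd m) {a c : F}
    (hc : c ^ 2 ^ e = c) (h : a ^ 2 ^ e + a = c) : c = 0 := by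
  have hfrob : a ^ 2 ^ e = a + c := by
    rw [← h, add_left_comm, CharTwo.add_self_eq_zero, add_zero]
  have hiter : ∀ j : ℕ, a ^ (2 ^ e) ^ j = a + j • c := by
    intro j
    induction j with
    | zero => simp
    | succ j ih =>
      have hjc : (j • c) ^ 2 ^ e = j • c := by
        rw [← iterateFrobenius_def (R := F) 2 e, map_nsmul, iterateFrobenius_def, hc]
      rw [pow_succ, pow_mul, ih, add_pow_char_pow, hfrob, hjc, succ_nsmul]
      abel
  have hmc : m • c = 0 := by
    have := hiter m
    rwa [← hF, FiniteField.pow_card, left_eq_add] at this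
  obtain ⟨j, rfl⟩ := hm
  rw [nsmul_eq_mul] at hmc
  push_cast at hmc
  reduce_mod_char! at hmc
  simpa using hmc

theorem eq_zero_of_pow_mul_add_mul_pow_eq (hF : Fintype.card F = (2 ^ e) ^ m) (hm : Odd m)
    {A C D : F} (hD : D ≠ 0) (hC : C ^ 2 ^ e = C)
    (h : A ^ 2 ^ e * D + A * D ^ 2 ^ e = C * D ^ (2 ^ e + 1)) : C = 0 := by
  refine eq_zero_of_pow_add_self_eq hF hm hC (a := A / D) ?_
  rw [div_pow, div_add_div _ _ (pow_ne_zero _ hD) hD, div_eq_iff (by positivity)]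
  linear_combination h

end ArtinSchreier

section Forms

variable {K F : Type} [Field F] {e : ℕ}

def frobForm (q : ℕ) (u v : F × K) : F := u.1 * v.1 ^ q + u.1 ^ q * v.1

theorem frobForm_self [CharP F 2] (q : ℕ) (u : F × K) : frobForm q u u = 0 := by
  simp only [frobForm, mul_comm u.1, CharTwo.add_self_eq_zero]

variable [Field K]

theorem frobForm_add_right [CharP F 2] (u v w : F × K) :
    frobForm (2 ^ e) u (v + w) = frobForm (2 ^ e) u v + frobForm (2 ^ e) u w := by
  simp only [frobForm, Prod.fst_add, add_pow_char_pow]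
  ring

variable [Algebra K F]

def altForm (u v : F × K) : F := algebraMap K F u.2 * v.1 + algebraMap K F v.2 * u.1

theorem gfun_eq (q : ℕ) (u v : F × K) :
    gfun K F q u v = altForm u v ^ (q + 1) + frobForm q u v := by
  rw [gfun, altForm, frobForm, add_assoc]

theorem altForm_add_right (u v w : F × K) : altForm u (v + w) = altForm u v + altForm u w := by
  simp only [altForm, Prod.fst_add, Prod.snd_add, map_add]
  ring

theorem altForm_smul_right (u v : F × K) (c : K) :
    altForm u (c • v) = algebraMap K F c * altForm u v := by
  simp only [altForm, Prod.smul_fst, Prod.smul_snd, smul_eq_mul]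
  simp only [Algebra.smul_def, map_mul]
  ring

theorem algebraMap_pow_eq_self [Fintype K] (hK : Fintype.card K = 2 ^ e) (c : K) :
    algebraMap K F c ^ 2 ^ e = algebraMap K F c := by
  rw [← map_pow, ← hK, FiniteField.pow_card]

theorem frobForm_smul_right [Fintype K] (hK : Fintype.card K = 2 ^ e) (u v : F × K) (c : K) :
    frobForm (2 ^ e) u (c • v) = algebraMap K F c * frobForm (2 ^ e) u v := by
  simp only [frobForm, Prod.smul_fst]
  simp only [Algebra.smul_def, mul_pow, algebraMap_pow_eq_self hK]
  ring

variable [CharP F 2]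

theorem altForm_self (u : F × K) : altForm u u = 0 := by
  simp only [altForm, mul_comm (algebraMap K F u.2), CharTwo.add_self_eq_zero]

theorem altForm_add_smul (u v : F × K) (α β γ δ : K) :
    altForm (α • u + β • v) (γ • u + δ • v) = algebraMap K F (α * δ + β * γ) * altForm u v := by
  simp only [altForm, Prod.fst_add, Prod.snd_add, Prod.smul_fst, Prod.smul_snd, smul_eq_mul]
  simp only [Algebra.smul_def, map_add, map_mul]
  linear_combination (norm := ring_nf)
  reduce_mod_char!

variable [Fintype K]

theorem frobForm_add_smul (hK : Fintype.card K = 2 ^ e) (u v : F × K) (α β γ δ : K) :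
    frobForm (2 ^ e) (α • u + β • v) (γ • u + δ • v)
      = algebraMap K F (α * δ + β * γ) * frobForm (2 ^ e) u v := by
  simp only [frobForm, Prod.fst_add, Prod.smul_fst]
  simp only [Algebra.smul_def, add_pow_char_pow, mul_pow, algebraMap_pow_eq_self hK, map_add,
    map_mul]
  linear_combination (norm := ring_nf)
  reduce_mod_char!

theorem gfun_add_smul (hK : Fintype.card K = 2 ^ e) (u v : F × K) (α β γ δ : K) :
    gfun K F (2 ^ e) (α • u + β • v) (γ • u + δ • v)
      = gfun K F (2 ^ e) u ((α * δ + β * γ) • v) := by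
  rw [gfun_eq, gfun_eq, altForm_add_smul, frobForm_add_smul hK, altForm_smul_right,
    frobForm_smul_right hK]

theorem gfun_smul_self (hK : Fintype.card K = 2 ^ e) (u : F × K) (c : K) :
    gfun K F (2 ^ e) u (c • u) = 0 := by
  rw [gfun_eq, altForm_smul_right, frobForm_smul_right hK, altForm_self, frobForm_self]
  simp

theorem gfun_add_smul_right (hK : Fintype.card K = 2 ^ e) (u v : F × K) (l m : K) :
    gfun K F (2 ^ e) u ((l + m) • v) = gfun K F (2 ^ e) u (l • v) + gfun K F (2 ^ e) u (m • v) := by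
  simp only [gfun_eq, altForm_smul_right, frobForm_smul_right hK, mul_pow, pow_succ,
    algebraMap_pow_eq_self hK]
  simp only [map_add]
  linear_combination (norm := ring_nf)
  reduce_mod_char!

end Forms

section Fibres

variable {K F : Type} [Field K] [Field F] [Algebra K F] [CharP F 2] {e m : ℕ}

theorem frobForm_eq_of_gfun_add_right_eq {u p w : F × K}
    (h : gfun K F (2 ^ e) u (p + w) = gfun K F (2 ^ e) u p) :
    altForm u p ^ 2 ^ e * altForm u w + altForm u p * altForm u w ^ 2 ^ e
      + altForm u w ^ (2 ^ e + 1) = frobForm (2 ^ e) u w := by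
  rw [gfun_eq, gfun_eq, altForm_add_right, frobForm_add_right, pow_succ, add_pow_char_pow] at h
  linear_combination (norm := ring_nf) h
  reduce_mod_char!

theorem mem_span_singleton_of_altForm_eq_zero {u w : F × K} (hu : u.2 ≠ 0)
    (h : altForm u w = 0) : w ∈ K ∙ u := by
  obtain ⟨X, x₁⟩ := u
  obtain ⟨W, ω⟩ := w
  simp only [altForm] at h
  refine mem_span_singleton.2 ⟨x₁⁻¹ * ω, Prod.ext ?_ ?_⟩
  · show (x₁⁻¹ * ω) • X = W
    have hx₁ : algebraMap K F x₁ ≠ 0 := (map_ne_zero _).2 hu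
    rw [Algebra.smul_def, map_mul, map_inv₀]
    field_simp
    linear_combination (norm := ring_nf) h
    reduce_mod_char!
  · show (x₁⁻¹ * ω) * x₁ = ω
    field_simp

variable [Fintype K] [Fintype F]

theorem altForm_eq_zero_of_gfun_add_right_eq (hK : Fintype.card K = 2 ^ e)
    (hF : Fintype.card F = (2 ^ e) ^ m) (hm : Odd m) {u p w : F × K} (hu : u.2 ≠ 0)
    (h : gfun K F (2 ^ e) u (p + w) = gfun K F (2 ^ e) u p) : altForm u w = 0 := by
  have hE := frobForm_eq_of_gfun_add_right_eq h
  by_contra hD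
  refine hu ((map_eq_zero (algebraMap K F)).1 ?_)
  -- With `D = altForm u w`, `a = (u.2 * altForm u p + u.1) / D` satisfies `a ^ q + a = u.2`.
  refine eq_zero_of_pow_mul_add_mul_pow_eq hF hm hD
    (A := algebraMap K F u.2 * altForm u p + u.1) (algebraMap_pow_eq_self hK u.2) ?_
  simp only [altForm, frobForm, add_pow_char_pow, mul_pow, algebraMap_pow_eq_self hK,
    pow_succ] at hE ⊢
  linear_combination (norm := ring_nf) algebraMap K F u.2 * hE
  reduce_mod_char!

theorem mem_span_singleton_of_gfun_add_right_eq (hK : Fintype.card K = 2 ^ e)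
    (hF : Fintype.card F = (2 ^ e) ^ m) (hm : Odd m) {u p w : F × K} (hu : u ≠ 0)
    (h : gfun K F (2 ^ e) u (p + w) = gfun K F (2 ^ e) u p) : w ∈ K ∙ u := by
  rcases ne_or_eq u.2 0 with hu₂ | hu₂
  · exact mem_span_singleton_of_altForm_eq_zero hu₂
      (altForm_eq_zero_of_gfun_add_right_eq hK hF hm hu₂ h)
  have hE := frobForm_eq_of_gfun_add_right_eq h
  obtain ⟨X, x₁⟩ := u
  obtain ⟨W, ω⟩ := w
  obtain rfl : x₁ = 0 := hu₂
  have hX : X ≠ 0 := fun hX => hu (by simp [hX])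
  have hfix := algebraMap_pow_eq_self (F := F) hK
  simp only [altForm, frobForm, map_zero, zero_mul, zero_add, mul_pow, pow_succ, hfix] at hE
  -- `hE` now reads `W ^ q * X + W * X ^ q = ω ^ 2 * X ^ (q + 1)`.
  have hω : algebraMap K F ω ^ 2 = 0 := by
    refine eq_zero_of_pow_mul_add_mul_pow_eq hF hm hX (A := W) ?_ ?_
    · rw [← pow_mul, mul_comm, pow_mul, hfix]
    · linear_combination (norm := ring_nf) hE
      reduce_mod_char!
  obtain ⟨κ, hκ⟩ : W / X ∈ Set.range (algebraMap K F) := by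
    refine FiniteField.mem_range_algebraMap_of_pow_card_eq ?_
    rw [hK, div_pow, div_eq_div_iff (pow_ne_zero _ hX) hX]
    linear_combination (norm := ring_nf) hE - X ^ 2 ^ e * X * hω
    reduce_mod_char!
  have hω₀ : ω = 0 := by simpa using hω
  refine mem_span_singleton.2 ⟨κ, Prod.ext ?_ (by simp [hω₀])⟩
  show κ • X = W
  rw [Algebra.smul_def, hκ, div_mul_cancel₀ _ hX]

end Fibres

section LinearAlgebra

variable {K V : Type*} [Field K] [AddCommGroup V] [Module K V] [FiniteDimensional K V]

theorem Submodule.exists_eq_span_pair_of_finrank_eq_two {S : Submodule K V}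
    (hS : finrank K S = 2) {u : V} (hu : u ∈ S) (hu₀ : u ≠ 0) :
    ∃ v ∉ K ∙ u, S = span K {u, v} := by
  have huS : K ∙ u < S := by
    refine lt_of_le_of_ne ((span_singleton_le_iff_mem _ _).2 hu) fun h => ?_
    have := finrank_span_singleton (K := K) hu₀
    rw [h] at this
    omega
  obtain ⟨v, hvS, hv⟩ := SetLike.exists_of_lt huS
  have hle : span K {u, v} ≤ S :=
    span_le.2 (Set.insert_subset hu (Set.singleton_subset_iff.2 hvS))
  have hlt : K ∙ u < span K {u, v} :=
    lt_of_le_of_ne (span_mono (by simp)) fun h => hv (h ▸ subset_span (by simp))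
  refine ⟨v, hv, (eq_of_le_of_finrank_eq hle ?_).symm⟩
  have := finrank_lt_finrank_of_lt hlt
  have := finrank_mono hle
  rw [finrank_span_singleton hu₀] at *
  omega

theorem Submodule.exists_eq_span_singleton_of_finrank_eq_one {S : Submodule K V}
    (hS : finrank K S = 1) : ∃ u ≠ 0, S = K ∙ u := by
  obtain ⟨u, rfl⟩ := ((finrank_le_one_iff_isPrincipal S).1 hS.le).principal
  refine ⟨u, fun hu => ?_, rfl⟩
  rw [hu, span_zero_singleton, finrank_bot] at hS
  exact zero_ne_one hS

end LinearAlgebra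

section Image

variable {K F : Type} [Field K] [Field F] [Algebra K F] [CharP F 2] [Fintype K] {e : ℕ}

theorem image2_gfun_span_pair (hK : Fintype.card K = 2 ^ e) (u v : F × K) :
    Set.image2 (gfun K F (2 ^ e)) (span K {u, v}) (span K {u, v})
      = Set.range fun l : K => gfun K F (2 ^ e) u (l • v) := by
  ext x
  constructor
  · rintro ⟨a, ha, b, hb, rfl⟩
    obtain ⟨α, β, rfl⟩ := mem_span_pair.1 ha
    obtain ⟨γ, δ, rfl⟩ := mem_span_pair.1 hb
    exact ⟨_, (gfun_add_smul hK u v α β γ δ).symm⟩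
  · rintro ⟨l, rfl⟩
    exact ⟨u, subset_span (by simp), l • v, smul_mem _ _ (subset_span (by simp)), rfl⟩

variable [Fintype F] {m : ℕ}

theorem image2_gfun_eq_image (hK : Fintype.card K = 2 ^ e) {S : Submodule K (F × K)}
    (hS : finrank K S = 2) {u : F × K} (hu : u ∈ S) (hu₀ : u ≠ 0) :
    Set.image2 (gfun K F (2 ^ e)) S S = gfun K F (2 ^ e) u '' S := by
  refine (Set.Subset.antisymm ?_ (Set.image_subset_image2_right hu))
  obtain ⟨v, -, hSuv⟩ := exists_eq_span_pair_of_finrank_eq_two hS hu hu₀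
  rw [hSuv, image2_gfun_span_pair hK]
  rintro _ ⟨l, rfl⟩
  exact ⟨l • v, smul_mem _ _ (subset_span (by simp)), rfl⟩

theorem gfun_smul_right_injective (hK : Fintype.card K = 2 ^ e)
    (hF : Fintype.card F = (2 ^ e) ^ m) (hm : Odd m) {u v : F × K} (hu : u ≠ 0)
    (hv : v ∉ K ∙ u) : Function.Injective fun l : K => gfun K F (2 ^ e) u (l • v) := by
  intro l l' h
  by_contra hne
  have hmem : (l - l') • v ∈ K ∙ u :=
    mem_span_singleton_of_gfun_add_right_eq hK hF hm hu (p := l' • v)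
      (by rw [← add_smul, add_sub_cancel]; exact h)
  exact hv ((smul_mem_iff _ (sub_ne_zero.2 hne)).1 hmem)

theorem exists_zmod_submodule_coe_eq_image2_gfun (hK : Fintype.card K = 2 ^ e)
    (hF : Fintype.card F = (2 ^ e) ^ m) (hm : Odd m) {S : Submodule K (F × K)}
    (hS : finrank K S = 2) :
    ∃ W : Submodule (ZMod 2) F,
      (W : Set F) = Set.image2 (gfun K F (2 ^ e)) S S ∧ finrank (ZMod 2) W = e := by
  obtain ⟨u, huS, hu₀⟩ := exists_mem_ne_zero_of_ne_bot (p := S) fun h => by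
    rw [h, finrank_bot] at hS
    omega
  obtain ⟨v, hv, rfl⟩ := exists_eq_span_pair_of_finrank_eq_two hS huS hu₀
  let φ : K →+ F := AddMonoidHom.mk' (fun l => gfun K F (2 ^ e) u (l • v))
    (gfun_add_smul_right hK u v)
  have hφ : Function.Injective φ := gfun_smul_right_injective hK hF hm hu₀ hv
  refine ⟨AddSubgroup.toZModSubmodule 2 φ.range, by simp [φ, image2_gfun_span_pair hK], ?_⟩
  set W := AddSubgroup.toZModSubmodule 2 φ.range
  have hcard : Nat.card W = Nat.card K := Nat.card_congr (AddMonoidHom.ofInjective hφ).toEquiv.symm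
  rw [Module.natCard_eq_pow_finrank (K := ZMod 2), Nat.card_zmod, Nat.card_eq_fintype_card,
    hK] at hcard
  exact Nat.pow_right_injective le_rfl hcard

theorem image2_gfun_inter_subset_zero (hK : Fintype.card K = 2 ^ e)
    (hF : Fintype.card F = (2 ^ e) ^ m) (hm : Odd m) {S₁ S₂ : Submodule K (F × K)}
    (hS₁ : finrank K S₁ = 2) (hS₂ : finrank K S₂ = 2) (hS : finrank K ↥(S₁ ⊓ S₂) = 1) :
    Set.image2 (gfun K F (2 ^ e)) S₁ S₁ ∩ Set.image2 (gfun K F (2 ^ e)) S₂ S₂ ⊆ {0} := by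
  obtain ⟨u, hu₀, hu⟩ := exists_eq_span_singleton_of_finrank_eq_one hS
  have hu₁₂ : u ∈ S₁ ⊓ S₂ := hu ▸ mem_span_singleton_self u
  rw [image2_gfun_eq_image hK hS₁ hu₁₂.1 hu₀, image2_gfun_eq_image hK hS₂ hu₁₂.2 hu₀]
  rintro _ ⟨⟨p, hp, rfl⟩, ⟨r, hr, hpr⟩⟩
  have hrp : r - p ∈ K ∙ u :=
    mem_span_singleton_of_gfun_add_right_eq hK hF hm hu₀ (by rwa [add_sub_cancel])
  have hr₁ : r ∈ S₁ := by
    simpa using add_mem hp ((span_singleton_le_iff_mem u S₁).2 hu₁₂.1 hrp)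
  obtain ⟨c, rfl⟩ := mem_span_singleton.1 (hu ▸ mem_inf.2 ⟨hr₁, hr⟩ : r ∈ K ∙ u)
  rw [Set.mem_singleton_iff, ← hpr, gfun_smul_self hK]

end Image

theorem gfun_graph_hom_general (e k : ℕ) (he : 1 ≤ e)
    (K F : Type) [Field K] [Field F] [Algebra K F] [Fintype K] [Fintype F] [CharP F 2]
    (hK : Fintype.card K = 2 ^ e) (hF : Fintype.card F = (2 ^ e) ^ (2 * k + 1))
    (S₁ S₂ : Submodule K (F × K))
    (hd₁ : Module.finrank K S₁ = 2) (hd₂ : Module.finrank K S₂ = 2)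
    (hadj : Module.finrank K ↥(S₁ ⊓ S₂) = 1) :
    ∃ W₁ W₂ : Submodule (ZMod 2) F,
      (W₁ : Set F) = {w : F | ∃ u ∈ S₁, ∃ v ∈ S₁, gfun K F (2 ^ e) u v = w} ∧
      (W₂ : Set F) = {w : F | ∃ u ∈ S₂, ∃ v ∈ S₂, gfun K F (2 ^ e) u v = w} ∧
      Module.finrank (ZMod 2) W₁ = e ∧ Module.finrank (ZMod 2) W₂ = e ∧
      W₁ ≠ W₂ ∧ W₁ ⊓ W₂ = ⊥ := by
  have hm : Odd (2 * k + 1) := odd_two_mul_add_one k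
  obtain ⟨W₁, hW₁, he₁⟩ := exists_zmod_submodule_coe_eq_image2_gfun hK hF hm hd₁
  obtain ⟨W₂, hW₂, he₂⟩ := exists_zmod_submodule_coe_eq_image2_gfun hK hF hm hd₂
  have hbot : W₁ ⊓ W₂ = ⊥ := by
    refine eq_bot_iff.2 fun x hx => image2_gfun_inter_subset_zero hK hF hm hd₁ hd₂ hadj ?_
    have hx' : x ∈ (W₁ : Set F) ∩ W₂ := hx
    rwa [hW₁, hW₂] at hx'
  refine ⟨W₁, W₂, hW₁, hW₂, he₁, he₂, fun h => ?_, hbot⟩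
  rw [← h, inf_idem] at hbot
  rw [hbot, finrank_bot] at he₁
  omega

/-- The map `S ↦ g(S)` is a graph homomorphism from the Grassmann graph `J_q(n,2)`
(`q = 2^e`, `n = 2k+2`) to the Kneser graph on `e`-dimensional `F_2`-subspaces of
`F_{q^{2k+1}} ≅ F_2^{(n-1)e}`: each image `g(S)` is an `e`-dimensional `F_2`-subspace,
and adjacent 2-spaces (meeting in a line) are sent to distinct, trivially
intersecting `F_2`-subspaces. -/
theorem gfun_graph_hom (e k n : ℕ) (he : 1 ≤ e) (hk : 1 ≤ k) (hn : n = 2 * k + 2)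
    (K F : Type) [Field K] [Field F] [Algebra K F] [Fintype K] [Fintype F] [CharP F 2]
    (hK : Fintype.card K = 2 ^ e) (hF : Fintype.card F = (2 ^ e) ^ (2 * k + 1))
    (S₁ S₂ : Submodule K (F × K))
    (hd₁ : Module.finrank K S₁ = 2) (hd₂ : Module.finrank K S₂ = 2)
    (hne : S₁ ≠ S₂) (hadj : Module.finrank K ↥(S₁ ⊓ S₂) = 1) :
    ∃ W₁ W₂ : Submodule (ZMod 2) F,
      (W₁ : Set F) = {w : F | ∃ u ∈ S₁, ∃ v ∈ S₁, gfun K F (2 ^ e) u v = w} ∧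
      (W₂ : Set F) = {w : F | ∃ u ∈ S₂, ∃ v ∈ S₂, gfun K F (2 ^ e) u v = w} ∧
      Module.finrank (ZMod 2) W₁ = e ∧ Module.finrank (ZMod 2) W₂ = e ∧
      W₁ ≠ W₂ ∧ W₁ ⊓ W₂ = ⊥ :=
  gfun_graph_hom_general e k he K F hK hF S₁ S₂ hd₁ hd₂ hadj
end
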